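/- arXiv:2407.14513 — 5 statements merged into one kernel-verified Lean document; each statement's English description precedes it below -/
import Mathlib

section
/- Deutsch entropic uncertainty principle: Let {τ_j}_{j=1}^n and {ω_k}_{k=1}^n be two orthonormal bases of a finite-dimensional complex Hilbert space H. For any unit vector h ∈ H with ⟨h, τ_j⟩ ≠ 0 and ⟨h, ω_k⟩ ≠ 0 for all j, k, we have S_τ(h) + S_ω(h) ≥ -2 log((1 + max_{j,k} |⟨τ_j, ω_k⟩|)/2). -/
open scoped BigOperators


open scoped BigOperators InnerProductSpace ComplexConjugate

/-- Key pointwise bound. -/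
lemma deutsch_key {H : Type*} [NormedAddCommGroup H] [InnerProductSpace ℂ H]
    (h τ ω : H) (hh : ‖h‖ = 1) (hτ : ‖τ‖ = 1) (hω : ‖ω‖ = 1) :
    ‖(⟪h, τ⟫_ℂ)‖ * ‖(⟪h, ω⟫_ℂ)‖ ≤ (1 + ‖(⟪τ, ω⟫_ℂ)‖) / 2 := by
  set a := ⟪h, τ⟫_ℂ with ha
  set b := ⟪h, ω⟫_ℂ with hb
  by_cases h0 : a = 0
  · simp only [h0, norm_zero, zero_mul]
    positivity
  by_cases h1 : b = 0
  · simp only [h1, norm_zero, mul_zero]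
    positivity
  set c : ℂ := (‖a‖ : ℂ) / a with hc
  set d : ℂ := (‖b‖ : ℂ) / b with hd
  have hcn : ‖c‖ = 1 := by
    simp only [hc, norm_div, Complex.norm_real]
    simp only [Real.norm_eq_abs, abs_abs]
    rw [_root_.abs_of_nonneg (norm_nonneg _)]
    exact div_self (norm_ne_zero_iff.mpr h0)
  have hdn : ‖d‖ = 1 := by
    simp only [hd, norm_div, Complex.norm_real]
    simp only [Real.norm_eq_abs, abs_abs]
    rw [_root_.abs_of_nonneg (norm_nonneg _)]
    exact div_self (norm_ne_zero_iff.mpr h1)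
  set y := c • τ + d • ω with hy
  have hinner : ⟪h, y⟫_ℂ = (‖a‖ : ℂ) + (‖b‖ : ℂ) := by
    simp only [hy, inner_add_right, inner_smul_right, ← ha, ← hb, hc, hd]
    field_simp
  have h2 : (‖a‖ + ‖b‖ : ℝ) ≤ ‖y‖ := by
    have : (‖a‖ + ‖b‖ : ℝ) = Complex.re ⟪h, y⟫_ℂ := by
      rw [hinner]; simp
    rw [this]
    calc Complex.re ⟪h, y⟫_ℂ ≤ ‖(⟪h, y⟫_ℂ)‖ := Complex.re_le_norm _
    _ ≤ ‖h‖ * ‖y‖ := norm_inner_le_norm h y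
    _ = ‖y‖ := by rw [hh, one_mul]
  have h3 : ‖y‖ ^ 2 ≤ 2 + 2 * ‖(⟪τ, ω⟫_ℂ)‖ := by
    have := @norm_add_sq ℂ _ _ _ _ (c • τ) (d • ω)
    rw [← hy] at this
    simp only [RCLike.re_to_complex] at this
    rw [this, norm_smul, norm_smul, hcn, hdn, one_mul, one_mul, hτ, hω]
    have hre : Complex.re ⟪c • τ, d • ω⟫_ℂ ≤ ‖(⟪τ, ω⟫_ℂ)‖ := by
      calc Complex.re ⟪c • τ, d • ω⟫_ℂ ≤ ‖(⟪c • τ, d • ω⟫_ℂ)‖ := Complex.re_le_norm _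
      _ = ‖conj c * d * ⟪τ, ω⟫_ℂ‖ := by
          rw [inner_smul_left, inner_smul_right, mul_assoc]
      _ = ‖(⟪τ, ω⟫_ℂ)‖ := by
          rw [norm_mul, norm_mul, RCLike.norm_conj, hcn, hdn]; ring
    nlinarith
  have h4 : (‖a‖ + ‖b‖) ^ 2 ≤ 2 + 2 * ‖(⟪τ, ω⟫_ℂ)‖ := by
    calc (‖a‖ + ‖b‖) ^ 2 ≤ ‖y‖ ^ 2 := by
          apply sq_le_sq' <;> nlinarith [norm_nonneg a, norm_nonneg b, norm_nonneg y]
    _ ≤ _ := h3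
  nlinarith [sq_nonneg (‖a‖ - ‖b‖)]

/-- Parseval. -/
lemma parseval_one {H : Type*} [NormedAddCommGroup H] [InnerProductSpace ℂ H]
    [FiniteDimensional ℂ H] {n : ℕ} (τ : OrthonormalBasis (Fin n) ℂ H) (h : H)
    (hh : ‖h‖ = 1) : ∑ j, ‖(⟪h, τ j⟫_ℂ)‖ ^ 2 = 1 := by
  have h1 : ‖τ.repr h‖ = 1 := by rw [τ.repr.norm_map, hh]
  have h2 : ‖τ.repr h‖ ^ 2 = ∑ j, ‖τ.repr h j‖ ^ 2 := by
    rw [EuclideanSpace.norm_eq, Real.sq_sqrt]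
    · positivity
  rw [h1, one_pow] at h2
  have h3 : ∀ j, ‖(⟪h, τ j⟫_ℂ)‖ ^ 2 = ‖τ.repr h j‖ ^ 2 := fun j => by
    rw [τ.repr_apply_apply, norm_inner_symm]
  simp_rw [h3]
  exact h2.symm


/-- **Deutsch entropic uncertainty principle**: for two orthonormal bases `τ`, `ω` of a
finite-dimensional complex Hilbert space and any unit vector `h` with nonvanishing
coefficients, `S_τ(h) + S_ω(h) ≥ -2 log((1 + max_{j,k} |⟨τ_j, ω_k⟩|)/2)`. -/
theorem deutsch_entropic_uncertainty {H : Type*} [NormedAddCommGroup H]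
    [InnerProductSpace ℂ H] [FiniteDimensional ℂ H] {n : ℕ}
    (τ ω : OrthonormalBasis (Fin n) ℂ H) (h : H) (hh : ‖h‖ = 1)
    (hτ : ∀ j, (inner ℂ h (τ j) : ℂ) ≠ 0) (hω : ∀ k, (inner ℂ h (ω k) : ℂ) ≠ 0) :
    (-∑ j, ‖(inner ℂ h (τ j) : ℂ)‖ ^ 2 * Real.log (‖(inner ℂ h (τ j) : ℂ)‖ ^ 2)) +
      (-∑ k, ‖(inner ℂ h (ω k) : ℂ)‖ ^ 2 * Real.log (‖(inner ℂ h (ω k) : ℂ)‖ ^ 2)) ≥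
    -2 * Real.log ((1 + ⨆ j, ⨆ k, ‖(inner ℂ (τ j) (ω k) : ℂ)‖) / 2) := by
  rcases Nat.eq_zero_or_pos n with hn | hn
  · exfalso
    subst hn
    have h0 : h = 0 := by simpa using (τ.sum_repr' h).symm
    rw [h0, norm_zero] at hh
    norm_num at hh
  haveI : Nonempty (Fin n) := Fin.pos_iff_nonempty.mp hn
  set p : Fin n → ℝ := fun j => ‖(⟪h, τ j⟫_ℂ)‖ ^ 2 with hp_def
  set q : Fin n → ℝ := fun k => ‖(⟪h, ω k⟫_ℂ)‖ ^ 2 with hq_def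
  have hp : ∑ j, p j = 1 := parseval_one τ h hh
  have hq : ∑ k, q k = 1 := parseval_one ω h hh
  have hp_pos : ∀ j, 0 < p j := fun j => pow_pos (norm_pos_iff.mpr (hτ j)) 2
  have hq_pos : ∀ k, 0 < q k := fun k => pow_pos (norm_pos_iff.mpr (hω k)) 2
  set c : ℝ := ⨆ j, ⨆ k, ‖(⟪τ j, ω k⟫_ℂ)‖ with hc_def
  have hbdd : ∀ j k, ‖(⟪τ j, ω k⟫_ℂ)‖ ≤ c := fun j k => by
    have h1 : ‖(⟪τ j, ω k⟫_ℂ)‖ ≤ ⨆ k', ‖(⟪τ j, ω k'⟫_ℂ)‖ :=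
      le_ciSup (f := fun k' => ‖(⟪τ j, ω k'⟫_ℂ)‖)
        (Set.Finite.bddAbove (Set.finite_range _)) k
    have h2 : (⨆ k', ‖(⟪τ j, ω k'⟫_ℂ)‖) ≤ c :=
      le_ciSup (f := fun j' => ⨆ k', ‖(⟪τ j', ω k'⟫_ℂ)‖)
        (Set.Finite.bddAbove (Set.finite_range _)) j
    exact h1.trans h2
  have hc_nonneg : 0 ≤ c :=
    le_trans (norm_nonneg _) (hbdd (Classical.arbitrary _) (Classical.arbitrary _))
  set M : ℝ := (1 + c) / 2 with hM_def
  have hM_pos : 0 < M := by rw [hM_def]; linarith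
  have hkey : ∀ j k, ‖(⟪h, τ j⟫_ℂ)‖ * ‖(⟪h, ω k⟫_ℂ)‖ ≤ M := fun j k => by
    refine le_trans (deutsch_key h (τ j) (ω k) hh (τ.orthonormal.1 j) (ω.orthonormal.1 k)) ?_
    rw [hM_def]
    have := hbdd j k
    linarith
  -- rewrite entropies as double sums
  have e1 : ∑ j, p j * Real.log (p j) = ∑ j, ∑ k, p j * q k * Real.log (p j) := by
    refine Finset.sum_congr rfl fun j _ => ?_
    have : ∑ k, p j * q k * Real.log (p j) = (∑ k, q k) * (p j * Real.log (p j)) := by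
      rw [Finset.sum_mul]
      exact Finset.sum_congr rfl fun k _ => by ring
    rw [this, hq, one_mul]
  have e2 : ∑ k, q k * Real.log (q k) = ∑ j, ∑ k, p j * q k * Real.log (q k) := by
    rw [Finset.sum_comm]
    refine Finset.sum_congr rfl fun k _ => ?_
    have : ∑ j, p j * q k * Real.log (q k) = (∑ j, p j) * (q k * Real.log (q k)) := by
      rw [Finset.sum_mul]
      exact Finset.sum_congr rfl fun j _ => by ring
    rw [this, hp, one_mul]
  have hS : (-∑ j, p j * Real.log (p j)) + (-∑ k, q k * Real.log (q k)) =
      ∑ j, ∑ k, p j * q k * (-(Real.log (p j * q k))) := by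
    have key : ∀ j k, p j * q k * (-(Real.log (p j * q k))) =
        -(p j * q k * Real.log (p j)) + -(p j * q k * Real.log (q k)) := fun j k => by
      rw [Real.log_mul (hp_pos j).ne' (hq_pos k).ne']; ring
    simp_rw [key, Finset.sum_add_distrib, Finset.sum_neg_distrib]
    rw [e1, e2]
  have hC : ∑ j, ∑ k, p j * q k * (-2 * Real.log M) = -2 * Real.log M := by
    have inner_eq : ∀ j : Fin n, ∑ k, p j * q k * (-2 * Real.log M)
        = p j * (-2 * Real.log M) := fun j => by
      rw [← Finset.sum_mul, ← Finset.mul_sum, hq, mul_one]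
    simp_rw [inner_eq]
    rw [← Finset.sum_mul, hp, one_mul]
  have hterm : ∀ j k, p j * q k * (-2 * Real.log M) ≤ p j * q k * (-(Real.log (p j * q k))) := by
    intro j k
    have hpq : p j * q k = (‖(⟪h, τ j⟫_ℂ)‖ * ‖(⟪h, ω k⟫_ℂ)‖) ^ 2 := by
      rw [hp_def, hq_def]; ring
    have hab_pos : 0 < ‖(⟪h, τ j⟫_ℂ)‖ * ‖(⟪h, ω k⟫_ℂ)‖ :=
      mul_pos (norm_pos_iff.mpr (hτ j)) (norm_pos_iff.mpr (hω k))
    have hlog : Real.log (p j * q k) ≤ 2 * Real.log M := by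
      rw [hpq, sq, Real.log_mul hab_pos.ne' hab_pos.ne', two_mul]
      have := Real.log_le_log hab_pos (hkey j k)
      linarith
    have hpq_nonneg : 0 ≤ p j * q k := le_of_lt (mul_pos (hp_pos j) (hq_pos k))
    apply mul_le_mul_of_nonneg_left _ hpq_nonneg
    linarith
  calc -2 * Real.log M = ∑ j, ∑ k, p j * q k * (-2 * Real.log M) := hC.symm
    _ ≤ ∑ j, ∑ k, p j * q k * (-(Real.log (p j * q k))) :=
        Finset.sum_le_sum fun j _ => Finset.sum_le_sum fun k _ => hterm j k
    _ = _ := hS.symm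
end

section
/- Modular Buzano inequality: If E is a Hilbert C*-module over a unital C*-algebra A and x, y, z ∈ E with ⟨z, z⟩ = 1 (the identity of A), then ‖⟨x, z⟩⟨z, y⟩‖ ≤ (‖x‖‖y‖ + ‖⟨x, y⟩‖)/2. -/
/-- The Hilbert C⋆-module class as it stood in Mathlib of December 2024 (right `Aᵐᵒᵖ`-action,
`⟪x, y <• a⟫ = ⟪x, y⟫ * a`); Mathlib's `CStarModule` now uses a left action instead. -/
class CStarModuleRight (A E : Type*) [NonUnitalSemiring A] [StarRing A]
    [Module ℂ A] [AddCommGroup E] [Module ℂ E] [PartialOrder A] [SMul Aᵐᵒᵖ E] [Norm A] [Norm E]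
    extends Inner A E where
  inner_add_right {x} {y} {z} : inner x (y + z) = inner x y + inner x z
  inner_self_nonneg {x} : 0 ≤ inner x x
  inner_self {x} : inner x x = 0 ↔ x = 0
  inner_op_smul_right {a : A} {x y : E} : inner x (MulOpposite.op a • y) = inner x y * a
  inner_smul_right_complex {z : ℂ} {x} {y} : inner x (z • y) = z • inner x y
  star_inner x y : star (inner x y) = inner y x
  norm_eq_sqrt_norm_inner_self x : ‖x‖ = √‖inner x x‖

/-!
If `⟪z, z⟫ = 1`, then `y ↦ z <• ⟪z, y⟫` is a projection and `y ↦ 2 • (z <• ⟪z, y⟫) - y` is the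
corresponding reflection, which preserves `⟪y, y⟫` and hence `‖y‖`. Since
`⟪x, 2 • (z <• ⟪z, y⟫) - y⟫ + ⟪x, y⟫ = 2 • (⟪x, z⟫ * ⟪z, y⟫)`, the triangle inequality and the
Cauchy–Schwarz inequality `‖⟪x, u⟫‖ ≤ ‖x‖ * ‖u‖` applied to the reflected vector `u` give the claim.
-/

open scoped RightActions

attribute [simp] CStarModuleRight.inner_add_right CStarModuleRight.star_inner
  CStarModuleRight.inner_op_smul_right CStarModuleRight.inner_smul_right_complex

namespace CStarModuleRight

section Basic

variable {A E : Type*} [NonUnitalRing A] [StarRing A] [Module ℂ A] [AddCommGroup E]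
  [Module ℂ E] [PartialOrder A] [SMul Aᵐᵒᵖ E] [Norm A] [Norm E] [CStarModuleRight A E]

local notation "⟪" x ", " y "⟫" => inner A x y

variable (A) in
def innerRight (x : E) : E →+ A := AddMonoidHom.mk' (inner A x) fun _ _ => inner_add_right

@[simp] lemma inner_op_smul_left {a : A} {x y : E} : ⟪x <• a, y⟫ = star a * ⟪x, y⟫ := by
  rw [← star_inner, inner_op_smul_right, star_mul, star_inner]

@[simp] lemma inner_zero_right {x : E} : ⟪x, 0⟫ = 0 := map_zero (innerRight A x)

@[simp] lemma inner_sub_right {x y z : E} : ⟪x, y - z⟫ = ⟪x, y⟫ - ⟪x, z⟫ :=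
  map_sub (innerRight A x) y z

@[simp] lemma inner_sub_left {x y z : E} : ⟪x - y, z⟫ = ⟪x, z⟫ - ⟪y, z⟫ := by
  rw [← star_inner, inner_sub_right, star_sub, star_inner, star_inner]

@[simp] lemma inner_nsmul_right {n : ℕ} {x y : E} : ⟪x, n • y⟫ = n • ⟪x, y⟫ :=
  map_nsmul (innerRight A x) n y

@[simp] lemma inner_nsmul_left {n : ℕ} {x y : E} : ⟪n • x, y⟫ = n • ⟪x, y⟫ := by
  rw [← star_inner, inner_nsmul_right, star_nsmul, star_inner]

@[simp] lemma inner_smul_right_real {r : ℝ} {x y : E} : ⟪x, r • y⟫ = r • ⟪x, y⟫ := by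
  rw [← Complex.coe_smul, inner_smul_right_complex, Complex.coe_smul]

variable [StarModule ℂ A]

@[simp] lemma inner_smul_left_real {r : ℝ} {x y : E} : ⟪r • x, y⟫ = r • ⟪x, y⟫ := by
  rw [← star_inner, inner_smul_right_real, star_smul, star_trivial, star_inner]

end Basic

section Reflection

variable {A E : Type*} [Ring A] [StarRing A] [Module ℂ A] [AddCommGroup E]
  [Module ℂ E] [PartialOrder A] [SMul Aᵐᵒᵖ E] [Norm A] [Norm E] [CStarModuleRight A E]

local notation "⟪" x ", " y "⟫" => inner A x y

variable (A) in
def reflection (z y : E) : E := 2 • (z <• ⟪z, y⟫) - y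

lemma inner_reflection_right (x z y : E) :
    ⟪x, reflection A z y⟫ = 2 • (⟪x, z⟫ * ⟪z, y⟫) - ⟪x, y⟫ := by
  simp [reflection]

lemma inner_reflection_self {z : E} (hz : ⟪z, z⟫ = 1) (y : E) :
    ⟪reflection A z y, reflection A z y⟫ = ⟪y, y⟫ := by
  simp only [reflection, inner_sub_left, inner_sub_right, inner_nsmul_left, inner_nsmul_right,
    inner_op_smul_left, inner_op_smul_right, hz, star_inner]
  noncomm_ring

lemma norm_reflection {z : E} (hz : ⟪z, z⟫ = 1) (y : E) : ‖reflection A z y‖ = ‖y‖ := by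
  rw [norm_eq_sqrt_norm_inner_self (A := A), inner_reflection_self hz,
    ← norm_eq_sqrt_norm_inner_self]

end Reflection

section CauchySchwarz

variable {A E : Type*} [CStarAlgebra A] [PartialOrder A] [AddCommGroup E]
  [Module ℂ E] [SMul Aᵐᵒᵖ E] [Norm E] [CStarModuleRight A E]

local notation "⟪" x ", " y "⟫" => inner A x y

variable (A) in
lemma norm_sq_eq (x : E) : ‖x‖ ^ 2 = ‖⟪x, x⟫‖ := by
  rw [norm_eq_sqrt_norm_inner_self (A := A), Real.sq_sqrt (norm_nonneg _)]

variable [StarOrderedRing A]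

lemma star_mul_inner_self_mul_le (a : A) (x : E) : star a * ⟪x, x⟫ * a ≤ ‖x‖ ^ 2 • (star a * a) :=
  norm_sq_eq A x ▸ CStarAlgebra.star_left_conjugate_le_norm_smul (hb := star_inner x x)

lemma inner_mul_inner_swap_le (x y : E) : ⟪y, x⟫ * ⟪x, y⟫ ≤ ‖x‖ ^ 2 • ⟪y, y⟫ := by
  rcases eq_or_ne x 0 with rfl | hx
  · simp [norm_eq_sqrt_norm_inner_self (A := A) (0 : E)]
  have ht : 0 < ‖x‖ ^ 2 := by rw [norm_sq_eq A, norm_pos_iff]; exact mt inner_self.mp hx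
  set a := ⟪x, y⟫
  set t := ‖x‖ ^ 2
  have key : 0 ≤ t • (t • ⟪y, y⟫ - star a * a) :=
    calc 0 ≤ ⟪x <• a - t • y, x <• a - t • y⟫ := inner_self_nonneg
      _ = star a * ⟪x, x⟫ * a - t • (star a * a) - t • (star a * a) + t • t • ⟪y, y⟫ := by
        simp only [inner_sub_left, inner_sub_right, inner_op_smul_left, inner_op_smul_right,
          inner_smul_left_real, inner_smul_right_real, star_inner, sub_mul, smul_sub,
          smul_mul_assoc, mul_assoc, a]
        abel
      _ ≤ t • (star a * a) - t • (star a * a) - t • (star a * a) + t • t • ⟪y, y⟫ := by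
        gcongr
        exact star_mul_inner_self_mul_le a x
      _ = t • (t • ⟪y, y⟫ - star a * a) := by module
  rw [smul_nonneg_iff_nonneg_of_pos_left ht, sub_nonneg, star_inner] at key
  exact key

lemma norm_inner_le (x y : E) : ‖⟪x, y⟫‖ ≤ ‖x‖ * ‖y‖ := by
  have hsq : ‖⟪x, y⟫‖ ^ 2 ≤ (‖x‖ * ‖y‖) ^ 2 :=
    calc ‖⟪x, y⟫‖ ^ 2 = ‖⟪y, x⟫ * ⟪x, y⟫‖ := by
          rw [← star_inner x, CStarRing.norm_star_mul_self, sq]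
      _ ≤ ‖‖x‖ ^ 2 • ⟪y, y⟫‖ := by
          refine CStarAlgebra.norm_le_norm_of_nonneg_of_le ?_ (inner_mul_inner_swap_le x y)
          rw [← star_inner x]
          exact star_mul_self_nonneg _
      _ = (‖x‖ * ‖y‖) ^ 2 := by
          rw [norm_smul, Real.norm_of_nonneg (by positivity), ← norm_sq_eq A, mul_pow]
  have hx : 0 ≤ ‖x‖ := norm_eq_sqrt_norm_inner_self (A := A) x ▸ Real.sqrt_nonneg _
  have hy : 0 ≤ ‖y‖ := norm_eq_sqrt_norm_inner_self (A := A) y ▸ Real.sqrt_nonneg _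
  exact (pow_le_pow_iff_left₀ (norm_nonneg _) (mul_nonneg hx hy) two_ne_zero).mp hsq

end CauchySchwarz

end CStarModuleRight

open CStarModuleRight in
/-- **Modular Buzano inequality** (Khosravi–Drnovšek–Moslehian): in a Hilbert C*-module `E`
over a unital C*-algebra `A`, if `⟨z,z⟩ = 1` then
`‖⟨x,z⟩⟨z,y⟩‖ ≤ (‖x‖‖y‖ + ‖⟨x,y⟩‖)/2`. -/
theorem modular_buzano_inequality {A E : Type*} [CStarAlgebra A]
    [PartialOrder A] [StarOrderedRing A] [AddCommGroup E] [Module ℂ E] [SMul Aᵐᵒᵖ E]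
    [Norm E] [CStarModuleRight A E] (x y z : E) (hz : (inner A z z : A) = 1) :
    ‖(inner A x z : A) * (inner A z y : A)‖ ≤ (‖x‖ * ‖y‖ + ‖(inner A x y : A)‖) / 2 := by
  have hsum : inner A x (reflection A z y) + inner A x y = 2 • (inner A x z * inner A z y) := by
    rw [inner_reflection_right, sub_add_cancel]
  calc ‖inner A x z * inner A z y‖
      = ‖inner A x (reflection A z y) + inner A x y‖ / 2 := by
        rw [hsum, RCLike.norm_nsmul ℝ, nsmul_eq_mul]; ring
    _ ≤ (‖x‖ * ‖reflection A z y‖ + ‖inner A x y‖) / 2 := by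
        gcongr
        exact (norm_add_le _ _).trans (by gcongr; exact norm_inner_le x _)
    _ = (‖x‖ * ‖y‖ + ‖inner A x y‖) / 2 := by rw [norm_reflection hz]
end

section
/- Ricaud–Torrésani entropic uncertainty principle: Let {τ_j}_{j=1}^n and {ω_k}_{k=1}^m be Parseval frames for a finite-dimensional complex Hilbert space H. For any unit vector h with all ⟨h, τ_j⟩ ≠ 0 and ⟨h, ω_k⟩ ≠ 0, S_τ(h) + S_ω(h) ≥ -2 log(max_{j,k} |⟨τ_j, ω_k⟩|). -/
open Complex Finset

private lemma normSq_rpow (x : ℂ) (r : ℝ) : Complex.normSq x ^ r = ‖x‖ ^ (2*r) := by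
  rw [Complex.normSq_eq_norm_sq, ← Real.rpow_natCast ‖x‖ 2,
    ← Real.rpow_mul (norm_nonneg x)]
  norm_num

private lemma mul_exp_log (x s : ℝ) (hx : 0 ≤ x) (hs : 0 < 1 + s) :
    x * Real.exp (s * Real.log x) = x ^ (1 + s) := by
  rcases eq_or_lt_of_le hx with h0 | h0
  · rw [← h0, Real.zero_rpow (ne_of_gt hs), zero_mul]
  · rw [Real.rpow_def_of_pos h0, mul_add, mul_one, Real.exp_add, Real.exp_log h0,
      mul_comm s (Real.log x)]

private lemma rt_interp {n m : ℕ} (M : Fin n → Fin m → ℂ) (a : Fin m → ℂ) {c θ : ℝ}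
    (hc : 0 < c) (hMc : ∀ j k, ‖M j k‖ ≤ c)
    (hop : ∀ v : Fin m → ℂ, ∑ j, ‖∑ k, M j k * v k‖ ^ 2 ≤ ∑ k, ‖v k‖ ^ 2)
    (ha2 : ∑ k, ‖a k‖ ^ 2 = 1) (hθ0 : 0 < θ) (hθ1 : θ < 1) :
    (∑ j, Complex.normSq (∑ k, M j k * (a k * Complex.exp ((θ * Real.log ‖a k‖ : ℝ) : ℂ)))
        ^ ((1:ℝ)/(1-θ))) ^ ((1-θ)/2) ≤ c ^ θ := by
  have h1θ : (0:ℝ) < 1 - θ := by linarith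
  have h1θ' : (0:ℝ) < 1 + θ := by linarith
  set B : Fin n → ℂ :=
    fun j => ∑ k, M j k * (a k * Complex.exp ((θ * Real.log ‖a k‖ : ℝ) : ℂ)) with hBdef
  set N : ℝ := ∑ j, Complex.normSq (B j) ^ ((1:ℝ)/(1-θ)) with hNdef
  have hNalt : N = ∑ j, ‖B j‖ ^ (2/(1-θ)) := by
    rw [hNdef]
    refine Finset.sum_congr rfl fun j _ => ?_
    rw [normSq_rpow]; congr 1; ring
  have hN0 : 0 ≤ N := by
    rw [hNalt]; exact Finset.sum_nonneg fun j _ => Real.rpow_nonneg (norm_nonneg _) _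
  by_cases hNz : N = 0
  · rw [hNz, Real.zero_rpow (by positivity)]
    positivity
  have hNpos : 0 < N := lt_of_le_of_ne hN0 (Ne.symm hNz)
  -- the dual vector
  set u : Fin n → ℂ :=
    fun j => (starRingEnd ℂ) (B j) * ((‖B j‖ ^ (2*θ/(1-θ)) : ℝ) : ℂ) with hudef
  have hu_norm : ∀ j, ‖u j‖ = ‖B j‖ ^ ((1+θ)/(1-θ)) := by
    intro j
    rcases eq_or_ne (B j) 0 with h0 | h0
    · simp [hudef, h0, Real.zero_rpow (by positivity : (2*θ/(1-θ) : ℝ) ≠ 0),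
        Real.zero_rpow (by positivity : ((1+θ)/(1-θ) : ℝ) ≠ 0)]
    · have hx : 0 < ‖B j‖ := norm_pos_iff.2 h0
      have key : ‖B j‖ ^ (1:ℝ) * ‖B j‖ ^ (2*θ/(1-θ)) = ‖B j‖ ^ ((1+θ)/(1-θ)) := by
        rw [← Real.rpow_add hx]; congr 1; field_simp; ring
      calc ‖u j‖ = ‖B j‖ * ‖B j‖ ^ (2*θ/(1-θ)) := by
            rw [hudef, norm_mul, RCLike.norm_conj, Complex.norm_real,
              Real.norm_eq_abs, _root_.abs_of_nonneg (Real.rpow_nonneg (norm_nonneg _) _)]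
        _ = ‖B j‖ ^ ((1+θ)/(1-θ)) := by rw [← key, Real.rpow_one]
  have hre_mul : ∀ (w : ℂ) (r : ℝ), (w * (r:ℂ)).re = w.re * r := by
    intro w r; simp [Complex.mul_re]
  -- the analytic family
  set A : Fin m → ℂ → ℂ :=
    fun k z => a k * Complex.exp (z * (Real.log ‖a k‖ : ℂ)) with hAdef
  set U : Fin n → ℂ → ℂ :=
    fun j z => u j * Complex.exp ((z - (θ:ℂ)) * (((1+θ)⁻¹ * Real.log ‖u j‖ : ℝ) : ℂ))
    with hUdef
  set G : ℂ → ℂ := fun z => ∑ j, U j z * ∑ k, M j k * A k z with hGdef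
  have hA_norm : ∀ k z, ‖A k z‖ = ‖a k‖ * Real.exp (z.re * Real.log ‖a k‖) := by
    intro k z
    rw [hAdef]
    simp only [norm_mul, Complex.norm_exp, hre_mul]
  have hU_norm : ∀ j z,
      ‖U j z‖ = ‖u j‖ * Real.exp (((z.re - θ) / (1+θ)) * Real.log ‖u j‖) := by
    intro j z
    rw [hUdef]
    simp only [norm_mul, Complex.norm_exp, hre_mul,
      Complex.sub_re, Complex.ofReal_re]
    rw [show (z.re - θ) * ((1+θ)⁻¹ * Real.log ‖u j‖) = ((z.re - θ) / (1+θ)) * Real.log ‖u j‖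
      by ring]
  have hsqr : ∀ (x : ℝ), 0 ≤ x → ∀ r : ℝ, (x ^ r) ^ (2:ℕ) = x ^ (2*r) := by
    intro x hx r
    rw [← Real.rpow_natCast (x ^ r) 2, ← Real.rpow_mul hx]
    congr 1; push_cast; ring
  have hu2 : ∀ j, ‖u j‖ ^ ((2:ℝ)/(1+θ)) = ‖B j‖ ^ (2/(1-θ)) := by
    intro j
    rw [hu_norm j, ← Real.rpow_mul (norm_nonneg _)]
    congr 1; field_simp
  have e1 : 1 + -(θ/(1+θ)) = 1/(1+θ) := by field_simp; ring
  have e2 : 1 + (1-θ)/(1+θ) = 2/(1+θ) := by field_simp; ring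
  -- norms on the left boundary line
  have hUleft : ∀ z : ℂ, z.re = 0 → ∀ j, ‖U j z‖ ^ (2:ℕ) = ‖B j‖ ^ (2/(1-θ)) := by
    intro z hz j
    rw [hU_norm j z, hz]
    rw [show ((0 - θ) / (1+θ)) * Real.log ‖u j‖
        = (-(θ / (1+θ))) * Real.log ‖u j‖ by ring]
    rw [mul_exp_log _ _ (norm_nonneg _) (by rw [e1]; positivity), e1,
      hsqr _ (norm_nonneg _), show 2 * ((1:ℝ)/(1+θ)) = (2:ℝ)/(1+θ) by ring]
    exact hu2 j
  have hAleft : ∀ z : ℂ, z.re = 0 → ∀ k, ‖A k z‖ = ‖a k‖ := by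
    intro z hz k
    rw [hA_norm k z, hz, zero_mul, Real.exp_zero, mul_one]
  -- norms on the right boundary line
  have hUright : ∀ z : ℂ, z.re = 1 → ∀ j, ‖U j z‖ = ‖B j‖ ^ (2/(1-θ)) := by
    intro z hz j
    rw [hU_norm j z, hz]
    rw [mul_exp_log _ _ (norm_nonneg _) (by rw [e2]; positivity), e2]
    exact hu2 j
  have hAright : ∀ z : ℂ, z.re = 1 → ∀ k, ‖A k z‖ = ‖a k‖ ^ (2:ℕ) := by
    intro z hz k
    rw [hA_norm k z, hz, mul_exp_log _ _ (norm_nonneg _) (by norm_num : (0:ℝ) < 1+1),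
      show (1:ℝ)+1 = ((2:ℕ):ℝ) by norm_num, Real.rpow_natCast]
  -- global bounds
  have hGleft : ∀ z : ℂ, z.re = 0 → ‖G z‖ ≤ Real.sqrt N := by
    intro z hz
    have h1 : ‖G z‖ ≤ ∑ j, ‖U j z‖ * ‖∑ k, M j k * A k z‖ := by
      rw [hGdef]
      exact (norm_sum_le _ _).trans (Finset.sum_le_sum fun j _ => le_of_eq (norm_mul _ _))
    have h2 : ∑ j, ‖U j z‖ * ‖∑ k, M j k * A k z‖
        ≤ Real.sqrt (∑ j, ‖U j z‖^2) * Real.sqrt (∑ j, ‖∑ k, M j k * A k z‖^2) :=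
      Real.sum_mul_le_sqrt_mul_sqrt _ _ _
    have h3 : ∑ j, ‖U j z‖^2 = N := by
      rw [hNalt]; exact Finset.sum_congr rfl fun j _ => hUleft z hz j
    have h4 : (∑ j, ‖∑ k, M j k * A k z‖^2) ≤ 1 := by
      refine (hop (fun k => A k z)).trans ?_
      rw [← ha2]
      exact le_of_eq (Finset.sum_congr rfl fun k _ => by rw [hAleft z hz k])
    calc ‖G z‖ ≤ _ := h1
      _ ≤ _ := h2
      _ ≤ Real.sqrt N * Real.sqrt 1 := by
          rw [h3]
          exact mul_le_mul_of_nonneg_left (Real.sqrt_le_sqrt h4) (Real.sqrt_nonneg _)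
      _ = Real.sqrt N := by rw [Real.sqrt_one, mul_one]
  have hGright : ∀ z : ℂ, z.re = 1 → ‖G z‖ ≤ c * N := by
    intro z hz
    have h1 : ‖G z‖ ≤ ∑ j, ‖U j z‖ * (c * 1) := by
      rw [hGdef]
      refine (norm_sum_le _ _).trans (Finset.sum_le_sum fun j _ => ?_)
      rw [norm_mul]
      refine mul_le_mul_of_nonneg_left ?_ (norm_nonneg _)
      refine (norm_sum_le _ _).trans ?_
      have hstep : ∑ k, ‖M j k * A k z‖ ≤ ∑ k, c * ‖A k z‖ := by
        refine Finset.sum_le_sum fun k _ => ?_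
        rw [norm_mul]
        exact mul_le_mul_of_nonneg_right (hMc j k) (norm_nonneg _)
      refine hstep.trans ?_
      rw [← Finset.mul_sum]
      have hsum1 : ∑ k, ‖A k z‖ = 1 := by
        rw [← ha2]; exact Finset.sum_congr rfl fun k _ => hAright z hz k
      rw [hsum1]
    calc ‖G z‖ ≤ ∑ j, ‖U j z‖ * (c * 1) := h1
      _ = c * ∑ j, ‖U j z‖ := by rw [← Finset.sum_mul]; ring
      _ = c * N := by
          rw [hNalt]
          congr 1
          exact Finset.sum_congr rfl fun j _ => hUright z hz j
  -- value at θ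
  have hGθ : G (θ:ℂ) = (N:ℂ) := by
    have hAθ : ∀ k, A k (θ:ℂ) = a k * Complex.exp ((θ * Real.log ‖a k‖ : ℝ) : ℂ) := by
      intro k; rw [hAdef]; push_cast; ring_nf
    have hUθ : ∀ j, U j (θ:ℂ) = u j := by
      intro j; rw [hUdef]; simp
    have hrow : ∀ j, ∑ k, M j k * A k (θ:ℂ) = B j := by
      intro j; rw [hBdef]; exact Finset.sum_congr rfl fun k _ => by rw [hAθ k]
    rw [hGdef]
    simp only [hUθ, hrow]
    rw [hNdef]
    push_cast
    refine Finset.sum_congr rfl fun j _ => ?_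
    rw [hudef]
    rcases eq_or_ne (B j) 0 with h0 | h0
    · simp [h0, Real.zero_rpow (show ((1-θ)⁻¹:ℝ) ≠ 0 by positivity),
        Real.zero_rpow (show ((1:ℝ)/(1-θ)) ≠ 0 by positivity)]
    · have hx : 0 < ‖B j‖ := norm_pos_iff.2 h0
      have hre : Complex.normSq (B j) * ‖B j‖ ^ (2*θ/(1-θ))
          = Complex.normSq (B j) ^ ((1:ℝ)/(1-θ)) := by
        rw [Complex.normSq_eq_norm_sq]
        rw [← Real.rpow_natCast ‖B j‖ 2, ← Real.rpow_add hx, ← Real.rpow_mul (norm_nonneg _)]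
        congr 1
        push_cast
        field_simp
        ring
      calc (starRingEnd ℂ) (B j) * (‖B j‖ ^ (2*θ/(1-θ)) : ℝ) * B j
          = ((Complex.normSq (B j) : ℂ)) * ((‖B j‖ ^ (2*θ/(1-θ)) : ℝ) : ℂ) := by
            rw [← Complex.mul_conj (B j)]; ring
        _ = (((Complex.normSq (B j) * ‖B j‖ ^ (2*θ/(1-θ)) : ℝ)) : ℂ) := by push_cast; ring
        _ = ((Complex.normSq (B j) ^ ((1:ℝ)/(1-θ)) : ℝ) : ℂ) := by rw [hre]
  -- differentiability and boundedness
  have hGdiff : Differentiable ℂ G := by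
    rw [hGdef]
    refine Differentiable.fun_sum fun j _ => Differentiable.fun_mul ?_ ?_
    · exact (((differentiable_id.sub_const _).mul_const _).cexp).const_mul _
    · exact Differentiable.fun_sum fun k _ =>
        ((differentiable_id.mul_const _).cexp.const_mul _).const_mul _
  have hGbdd : BddAbove
      ((norm ∘ G) '' (Complex.HadamardThreeLines.verticalClosedStrip 0 1)) := by
    refine ⟨∑ j, (‖u j‖ * Real.exp |Real.log ‖u j‖|) *
        ∑ k, c * (‖a k‖ * Real.exp |Real.log ‖a k‖|), ?_⟩
    rintro y ⟨z, hz, rfl⟩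
    have hz' : z.re ∈ Set.Icc (0:ℝ) 1 := hz
    simp only [Function.comp_apply]
    rw [hGdef]
    refine (norm_sum_le _ _).trans (Finset.sum_le_sum fun j _ => ?_)
    rw [norm_mul]
    refine mul_le_mul ?_ ?_ (norm_nonneg _) (by positivity)
    · rw [hU_norm]
      refine mul_le_mul_of_nonneg_left (Real.exp_le_exp.2 ?_) (norm_nonneg _)
      calc (z.re - θ)/(1+θ) * Real.log ‖u j‖
          ≤ |(z.re - θ)/(1+θ) * Real.log ‖u j‖| := le_abs_self _
        _ = |(z.re - θ)/(1+θ)| * |Real.log ‖u j‖| := abs_mul _ _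
        _ ≤ 1 * |Real.log ‖u j‖| := by
            refine mul_le_mul_of_nonneg_right ?_ (abs_nonneg _)
            rw [abs_div, div_le_one (by positivity), abs_of_pos h1θ']
            have h01 := hz'.1; have h02 := hz'.2
            rw [abs_le]; constructor <;> linarith
        _ = |Real.log ‖u j‖| := one_mul _
    · refine (norm_sum_le _ _).trans (Finset.sum_le_sum fun k _ => ?_)
      rw [norm_mul]
      refine mul_le_mul (hMc j k) ?_ (norm_nonneg _) (le_of_lt hc)
      rw [hA_norm]
      refine mul_le_mul_of_nonneg_left (Real.exp_le_exp.2 ?_) (norm_nonneg _)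
      calc z.re * Real.log ‖a k‖ ≤ |z.re * Real.log ‖a k‖| := le_abs_self _
        _ = |z.re| * |Real.log ‖a k‖| := abs_mul _ _
        _ ≤ 1 * |Real.log ‖a k‖| := mul_le_mul_of_nonneg_right
            (by rw [_root_.abs_of_nonneg hz'.1]; exact hz'.2) (abs_nonneg _)
        _ = |Real.log ‖a k‖| := one_mul _
  -- three lines
  have key := Complex.HadamardThreeLines.norm_le_interp_of_mem_verticalClosedStrip' (f := G) zero_lt_one
      (z := (θ:ℂ)) (a := Real.sqrt N) (b := c * N)
      (by simp only [Complex.HadamardThreeLines.verticalClosedStrip, Set.mem_preimage,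
            Complex.ofReal_re, Set.mem_Icc]
          exact ⟨hθ0.le, hθ1.le⟩)
      hGdiff.diffContOnCl hGbdd
      (fun z hz => hGleft z hz) (fun z hz => hGright z hz)
  rw [hGθ] at key
  have hNnorm : ‖(N:ℂ)‖ = N := by
    rw [Complex.norm_real, Real.norm_eq_abs, _root_.abs_of_nonneg hN0]
  rw [hNnorm, Complex.ofReal_re, sub_zero, sub_zero, div_one] at key
  have hsqrtN : Real.sqrt N ^ (1-θ) = N ^ ((1-θ)/2) := by
    rw [Real.sqrt_eq_rpow, ← Real.rpow_mul hN0]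
    congr 1; ring
  rw [hsqrtN, Real.mul_rpow (le_of_lt hc) hN0] at key
  have hNsplit : N = N ^ ((1-θ)/2) * N ^ ((1+θ)/2) := by
    rw [← Real.rpow_add hNpos, show ((1-θ)/2 + (1+θ)/2 : ℝ) = 1 by ring, Real.rpow_one]
  have key2 : N ^ ((1-θ)/2) * N ^ ((1+θ)/2) ≤ c^θ * N ^ ((1+θ)/2) := by
    calc N ^ ((1-θ)/2) * N ^ ((1+θ)/2) = N := hNsplit.symm
      _ ≤ N^((1-θ)/2) * (c^θ * N^θ) := key
      _ = c^θ * N ^ ((1+θ)/2) := by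
          rw [show ((1+θ)/2 : ℝ) = (1-θ)/2 + θ by ring, Real.rpow_add hNpos]; ring
  exact le_of_mul_le_mul_right key2 (Real.rpow_pos_of_pos hNpos _)

set_option maxHeartbeats 1000000

/-- **Ricaud–Torrésani entropic uncertainty principle**: for Parseval frames
`{τ_j}_{j=1}^n`, `{ω_k}_{k=1}^m` of a finite-dimensional complex Hilbert space and a unit
vector `h` with nonvanishing coefficients,
`S_τ(h) + S_ω(h) ≥ -2 log(max_{j,k} |⟨τ_j,ω_k⟩|)`. -/
theorem ricaud_torresani_entropic_uncertainty {H : Type*} [NormedAddCommGroup H]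
    [InnerProductSpace ℂ H] [FiniteDimensional ℂ H] {n m : ℕ}
    (τ : Fin n → H) (ω : Fin m → H)
    (hPτ : ∀ v : H, ∑ j, (inner ℂ (τ j) v : ℂ) • τ j = v)
    (hPω : ∀ v : H, ∑ k, (inner ℂ (ω k) v : ℂ) • ω k = v)
    (h : H) (hh : ‖h‖ = 1)
    (hτ : ∀ j, (inner ℂ h (τ j) : ℂ) ≠ 0) (hω : ∀ k, (inner ℂ h (ω k) : ℂ) ≠ 0) :
    (-∑ j, ‖(inner ℂ h (τ j) : ℂ)‖ ^ 2 * Real.log (‖(inner ℂ h (τ j) : ℂ)‖ ^ 2)) +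
      (-∑ k, ‖(inner ℂ h (ω k) : ℂ)‖ ^ 2 * Real.log (‖(inner ℂ h (ω k) : ℂ)‖ ^ 2)) ≥
    -2 * Real.log (⨆ j, ⨆ k, ‖(inner ℂ (τ j) (ω k) : ℂ)‖) := by
  classical
  set b : Fin n → ℂ := fun j => (inner ℂ (τ j) h : ℂ) with hbdef
  set a : Fin m → ℂ := fun k => (inner ℂ (ω k) h : ℂ) with hadef
  set M : Fin n → Fin m → ℂ := fun j k => (inner ℂ (τ j) (ω k) : ℂ) with hMdef
  set c : ℝ := ⨆ j, ⨆ k, ‖M j k‖ with hcdef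
  have hb0 : ∀ j, b j ≠ 0 := by
    intro j hj
    apply hτ j
    rw [← inner_conj_symm]
    rw [hbdef] at hj
    simp only at hj
    rw [hj, map_zero]
  have ha0 : ∀ k, a k ≠ 0 := by
    intro k hk
    apply hω k
    rw [← inner_conj_symm]
    rw [hadef] at hk
    simp only at hk
    rw [hk, map_zero]
  have hbeq : ∀ j, b j = ∑ k, M j k * a k := by
    intro j
    rw [hbdef]
    simp only
    conv_lhs => rw [← hPω h]
    rw [inner_sum]
    exact Finset.sum_congr rfl fun k _ => by rw [inner_smul_right]; ring
  -- Parseval sums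
  have parτ : ∀ x : H, (∑ j, ‖(inner ℂ (τ j) x : ℂ)‖^2) = ‖x‖^2 := by
    intro x
    have h1 : (inner ℂ x x : ℂ) = ∑ j, (inner ℂ (τ j) x : ℂ) * (inner ℂ x (τ j) : ℂ) := by
      calc (inner ℂ x x : ℂ) = inner ℂ x (∑ j, (inner ℂ (τ j) x : ℂ) • τ j) := by rw [hPτ x]
        _ = ∑ j, (inner ℂ (τ j) x : ℂ) * (inner ℂ x (τ j) : ℂ) := by
            rw [inner_sum]
            exact Finset.sum_congr rfl fun j _ => by rw [inner_smul_right]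
    have h2 : (inner ℂ x x : ℂ) = ((∑ j, ‖(inner ℂ (τ j) x : ℂ)‖^2 : ℝ) : ℂ) := by
      rw [h1]
      push_cast
      refine Finset.sum_congr rfl fun j _ => ?_
      rw [← inner_conj_symm x (τ j), Complex.mul_conj]
      rw [Complex.normSq_eq_norm_sq]
      push_cast
      ring
    have h3 : (inner ℂ x x : ℂ) = ((‖x‖^2 : ℝ) : ℂ) := by
      rw [inner_self_eq_norm_sq_to_K]; norm_cast
    have := h2.symm.trans h3
    exact_mod_cast this
  have parω : ∀ x : H, (∑ k, ‖(inner ℂ (ω k) x : ℂ)‖^2) = ‖x‖^2 := by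
    intro x
    have h1 : (inner ℂ x x : ℂ) = ∑ k, (inner ℂ (ω k) x : ℂ) * (inner ℂ x (ω k) : ℂ) := by
      calc (inner ℂ x x : ℂ) = inner ℂ x (∑ k, (inner ℂ (ω k) x : ℂ) • ω k) := by rw [hPω x]
        _ = ∑ k, (inner ℂ (ω k) x : ℂ) * (inner ℂ x (ω k) : ℂ) := by
            rw [inner_sum]
            exact Finset.sum_congr rfl fun k _ => by rw [inner_smul_right]
    have h2 : (inner ℂ x x : ℂ) = ((∑ k, ‖(inner ℂ (ω k) x : ℂ)‖^2 : ℝ) : ℂ) := by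
      rw [h1]
      push_cast
      refine Finset.sum_congr rfl fun k _ => ?_
      rw [← inner_conj_symm x (ω k), Complex.mul_conj]
      rw [Complex.normSq_eq_norm_sq]
      push_cast
      ring
    have h3 : (inner ℂ x x : ℂ) = ((‖x‖^2 : ℝ) : ℂ) := by
      rw [inner_self_eq_norm_sq_to_K]; norm_cast
    have := h2.symm.trans h3
    exact_mod_cast this
  have hsum_p : ∑ j, ‖b j‖^2 = 1 := by
    have := parτ h; rw [hh] at this; simpa using this
  have hsum_q : ∑ k, ‖a k‖^2 = 1 := by
    have := parω h; rw [hh] at this; simpa using this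
  -- operator bound
  have hop : ∀ v : Fin m → ℂ, ∑ j, ‖∑ k, M j k * v k‖ ^ 2 ≤ ∑ k, ‖v k‖ ^ 2 := by
    intro v
    set x : H := ∑ k, v k • ω k with hxdef
    have hx1 : ∀ j, (inner ℂ (τ j) x : ℂ) = ∑ k, M j k * v k := by
      intro j
      rw [hxdef, inner_sum]
      exact Finset.sum_congr rfl fun k _ => by rw [inner_smul_right]; ring
    have hx2 : ∑ j, ‖∑ k, M j k * v k‖^2 = ‖x‖^2 := by
      rw [← parτ x]
      exact Finset.sum_congr rfl fun j _ => by rw [hx1 j]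
    have hxx : (inner ℂ x x : ℂ) = ∑ k, (starRingEnd ℂ) (v k) * (inner ℂ (ω k) x : ℂ) := by
      calc (inner ℂ x x : ℂ) = inner ℂ (∑ k, v k • ω k) x := by rw [← hxdef]
        _ = ∑ k, (starRingEnd ℂ) (v k) * (inner ℂ (ω k) x : ℂ) := by
            rw [sum_inner]
            exact Finset.sum_congr rfl fun k _ => by rw [inner_smul_left]
    have hnx : ‖x‖^2 = ‖(inner ℂ x x : ℂ)‖ := by
      rw [inner_self_eq_norm_sq_to_K]
      rw [norm_pow, RCLike.norm_ofReal, _root_.abs_of_nonneg (norm_nonneg x)]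
    have hcs : ‖x‖^2 ≤ Real.sqrt (∑ k, ‖v k‖^2) * ‖x‖ := by
      rw [hnx, hxx]
      refine (norm_sum_le _ _).trans ?_
      have step : ∀ k ∈ Finset.univ, ‖(starRingEnd ℂ) (v k) * (inner ℂ (ω k) x : ℂ)‖
          = ‖v k‖ * ‖(inner ℂ (ω k) x : ℂ)‖ := by
        intro k _; rw [norm_mul, RCLike.norm_conj]
      rw [Finset.sum_congr rfl step]
      refine (Real.sum_mul_le_sqrt_mul_sqrt _ _ _).trans ?_
      rw [parω x, Real.sqrt_sq (norm_nonneg x)]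
    have hx3 : ‖x‖^2 ≤ ∑ k, ‖v k‖^2 := by
      rcases eq_or_lt_of_le (norm_nonneg x) with hx0 | hx0
      · rw [← hx0]
        simpa using Finset.sum_nonneg fun k _ => sq_nonneg ‖v k‖
      · have h5 : ‖x‖ ≤ Real.sqrt (∑ k, ‖v k‖^2) := by
          have := hcs
          rw [pow_two] at this
          exact le_of_mul_le_mul_right (by linarith [this]) hx0
        calc ‖x‖^2 ≤ Real.sqrt (∑ k, ‖v k‖^2)^2 := pow_le_pow_left₀ (norm_nonneg x) h5 2
          _ = ∑ k, ‖v k‖^2 := Real.sq_sqrt (by positivity)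
    rw [hx2]; exact hx3
  -- positivity of c
  have hn : 0 < n := by
    rcases Nat.eq_zero_or_pos n with h0 | h0
    · exfalso
      have := hPτ h
      subst h0
      rw [Finset.univ_eq_empty, Finset.sum_empty] at this
      rw [← this, norm_zero] at hh
      norm_num at hh
    · exact h0
  have j0 : Fin n := ⟨0, hn⟩
  have hMc : ∀ j k, ‖M j k‖ ≤ c := by
    intro j k
    rw [hcdef]
    calc ‖M j k‖ ≤ ⨆ k', ‖M j k'‖ :=
          le_ciSup (f := fun k' => ‖M j k'‖)
            (Set.Finite.bddAbove (Set.finite_range _)) k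
      _ ≤ ⨆ j', ⨆ k', ‖M j' k'‖ :=
          le_ciSup (f := fun j' => ⨆ k', ‖M j' k'‖)
            (Set.Finite.bddAbove (Set.finite_range _)) j
  have hc : 0 < c := by
    obtain ⟨k0, _, hk0⟩ := Finset.exists_ne_zero_of_sum_ne_zero
      (show ∑ k, M j0 k * a k ≠ 0 by rw [← hbeq j0]; exact hb0 j0)
    have hM0 : M j0 k0 ≠ 0 := fun hz => hk0 (by rw [hz, zero_mul])
    exact lt_of_lt_of_le (norm_pos_iff.2 hM0) (hMc j0 k0)
  -- the interpolation functions
  set Bf : ℝ → Fin n → ℂ :=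
    fun θ j => ∑ k, M j k * (a k * Complex.exp ((θ * Real.log ‖a k‖ : ℝ) : ℂ)) with hBfdef
  set Nf : ℝ → ℝ := fun θ => ∑ j, Complex.normSq (Bf θ j) ^ ((1:ℝ)/(1-θ)) with hNfdef
  set φ : ℝ → ℝ := fun θ => ((1-θ)/2) * Real.log (Nf θ) - θ * Real.log c with hφdef
  have hBf0 : ∀ j, Bf 0 j = b j := by
    intro j
    rw [hBfdef, hbeq j]
    simp
  have hp_pos : ∀ j, 0 < Complex.normSq (b j) := fun j => Complex.normSq_pos.2 (hb0 j)
  have hsum_p' : ∑ j, Complex.normSq (b j) = 1 := by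
    rw [← hsum_p]
    exact Finset.sum_congr rfl fun j _ => by
      rw [Complex.normSq_eq_norm_sq]
  have hNf0 : Nf 0 = 1 := by
    rw [hNfdef]
    simp only
    have hterm : ∀ j : Fin n, Complex.normSq (Bf 0 j) ^ ((1:ℝ)/(1-0)) = Complex.normSq (b j) := by
      intro j; rw [hBf0 j]; norm_num
    rw [Finset.sum_congr rfl (fun j _ => hterm j), hsum_p']
  -- derivatives
  set B' : Fin n → ℂ := fun j => ∑ k, M j k * (a k * (Real.log ‖a k‖ : ℂ)) with hB'def
  have hBd : ∀ j, HasDerivAt (fun θ => Bf θ j) (B' j) 0 := by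
    intro j
    rw [hB'def]
    simp only [hBfdef]
    refine HasDerivAt.fun_sum fun k _ => ?_
    have h1 : HasDerivAt (fun θ : ℝ => ((θ * Real.log ‖a k‖ : ℝ) : ℂ))
        ((Real.log ‖a k‖ : ℝ) : ℂ) 0 := (hasDerivAt_mul_const (Real.log ‖a k‖)).ofReal_comp
    have h3 := (h1.cexp.const_mul (a k)).const_mul (M j k)
    refine h3.congr_deriv ?_
    simp
  have hnsd : ∀ j, HasDerivAt (fun θ => Complex.normSq (Bf θ j))
      (2 * (((starRingEnd ℂ) (b j)) * B' j).re) 0 := by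
    intro j
    have hre : HasDerivAt (fun θ => (Bf θ j).re) ((B' j).re) 0 :=
      (Complex.reCLM.hasFDerivAt.comp_hasDerivAt 0 (hBd j))
    have him : HasDerivAt (fun θ => (Bf θ j).im) ((B' j).im) 0 :=
      (Complex.imCLM.hasFDerivAt.comp_hasDerivAt 0 (hBd j))
    have h4 := (hre.mul hre).add (him.mul him)
    have heq : (fun θ => Complex.normSq (Bf θ j))
        = fun θ => (Bf θ j).re * (Bf θ j).re + (Bf θ j).im * (Bf θ j).im := by
      funext θ; rw [Complex.normSq_apply]
    rw [heq]
    refine h4.congr_deriv ?_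
    rw [hBf0 j]
    simp [Complex.mul_re, Complex.conj_re, Complex.conj_im]
    ring
  have hed : HasDerivAt (fun θ : ℝ => (1:ℝ)/(1-θ)) 1 0 := by
    have h1 : HasDerivAt (fun θ : ℝ => 1-θ) (-1 : ℝ) 0 := by
      simpa using (hasDerivAt_id (0:ℝ)).const_sub 1
    have h2 := h1.inv (by norm_num)
    simp only [one_div]
    refine h2.congr_deriv ?_
    norm_num
  set DN : ℝ := ∑ j, (2 * (((starRingEnd ℂ) (b j)) * B' j).re
      + Complex.normSq (b j) * Real.log (Complex.normSq (b j))) with hDNdef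
  have hNd : HasDerivAt Nf DN 0 := by
    rw [hNfdef, hDNdef]
    refine HasDerivAt.fun_sum fun j _ => ?_
    have hpos : (0:ℝ) < Complex.normSq (Bf 0 j) := by rw [hBf0 j]; exact hp_pos j
    have h5 := (hnsd j).rpow hed hpos
    refine h5.congr_deriv ?_
    rw [hBf0 j]
    norm_num
  have hlogNd : HasDerivAt (fun θ => Real.log (Nf θ)) DN 0 := by
    have h6 := hNd.log (by rw [hNf0]; norm_num)
    simpa [hNf0] using h6
  have hφd : HasDerivAt φ (DN/2 - Real.log c) 0 := by
    rw [hφdef]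
    have h1 : HasDerivAt (fun θ:ℝ => (1-θ)/2) (-1/2 : ℝ) 0 := by
      have := ((hasDerivAt_id (0:ℝ)).const_sub 1).div_const 2
      simpa using this
    have h3 := (h1.mul hlogNd).sub ((hasDerivAt_id (0:ℝ)).mul_const (Real.log c))
    refine h3.congr_deriv ?_
    simp [hNf0]
    ring
  -- eventual nonpositivity of φ on the right
  have hev1 : ∀ᶠ θ in nhds (0:ℝ), 0 < Complex.normSq (Bf θ j0) := by
    have hval : (0:ℝ) < Complex.normSq (Bf 0 j0) := by rw [hBf0 j0]; exact hp_pos j0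
    exact (hnsd j0).continuousAt.eventually (eventually_gt_nhds hval)
  have hev : ∀ᶠ θ in nhdsWithin (0:ℝ) (Set.Ioi 0), φ θ ≤ 0 := by
    filter_upwards [Ioo_mem_nhdsGT_of_mem
        (Set.mem_Ico.2 ⟨le_refl (0:ℝ), (by norm_num : (0:ℝ) < 1)⟩),
      hev1.filter_mono nhdsWithin_le_nhds] with θ hθIoo hθB
    obtain ⟨hθ0, hθ1⟩ := hθIoo
    have hNθpos : 0 < Nf θ := by
      rw [hNfdef]
      simp only
      refine lt_of_lt_of_le (Real.rpow_pos_of_pos hθB ((1:ℝ)/(1-θ))) ?_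
      exact Finset.single_le_sum (fun j _ => Real.rpow_nonneg (Complex.normSq_nonneg _) _)
        (Finset.mem_univ j0)
    have hkey : (Nf θ) ^ ((1-θ)/2) ≤ c ^ θ :=
      rt_interp M a hc hMc hop hsum_q hθ0 hθ1
    have hlog := Real.log_le_log (Real.rpow_pos_of_pos hNθpos _) hkey
    rw [Real.log_rpow hNθpos, Real.log_rpow hc] at hlog
    rw [hφdef]
    simp only
    linarith
  have hφ0 : φ 0 = 0 := by
    rw [hφdef]; simp [hNf0]
  have hslope : Filter.Tendsto (slope φ 0) (nhdsWithin 0 (Set.Ioi 0))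
      (nhds (DN/2 - Real.log c)) := by
    have h7 := (hφd.hasDerivWithinAt (s := Set.Ioi (0:ℝ)))
    rw [hasDerivWithinAt_iff_tendsto_slope] at h7
    rwa [Set.diff_singleton_eq_self (by simp)] at h7
  have hD : DN/2 - Real.log c ≤ 0 := by
    refine le_of_tendsto hslope ?_
    filter_upwards [hev, self_mem_nhdsWithin] with θ hφθ hθpos
    rw [slope_def_field]
    have hθpos' : (0:ℝ) < θ := hθpos
    rw [div_nonpos_iff]
    right
    constructor
    · rw [hφ0]; linarith
    · linarith
  -- identify DN with the entropies
  have hdual : ∀ k, ∑ j, (starRingEnd ℂ) (b j) * M j k = (starRingEnd ℂ) (a k) := by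
    intro k
    have h8 : ((starRingEnd ℂ) (a k)) = (inner ℂ h (ω k) : ℂ) := by
      rw [hadef]; simp only; rw [inner_conj_symm]
    rw [h8]
    symm
    calc (inner ℂ h (ω k) : ℂ) = inner ℂ h (∑ j, (inner ℂ (τ j) (ω k) : ℂ) • τ j) := by
          rw [hPτ (ω k)]
      _ = ∑ j, (inner ℂ (τ j) (ω k) : ℂ) * (inner ℂ h (τ j) : ℂ) := by
          rw [inner_sum]; exact Finset.sum_congr rfl fun j _ => by rw [inner_smul_right]
      _ = ∑ j, (starRingEnd ℂ) (b j) * M j k := by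
          refine Finset.sum_congr rfl fun j _ => ?_
          rw [hbdef, hMdef]; simp only; rw [← inner_conj_symm h (τ j)]; ring
  have hDN_eq : DN = (∑ j, Complex.normSq (b j) * Real.log (Complex.normSq (b j)))
      + ∑ k, Complex.normSq (a k) * Real.log (Complex.normSq (a k)) := by
    rw [hDNdef, Finset.sum_add_distrib, add_comm]
    congr 1
    have h9 : ∑ j, ((starRingEnd ℂ) (b j) * B' j)
        = ∑ k, (Complex.normSq (a k) : ℂ) * ((Real.log ‖a k‖ : ℝ) : ℂ) := by
      rw [hB'def]
      simp only [Finset.mul_sum]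
      rw [Finset.sum_comm]
      refine Finset.sum_congr rfl fun k _ => ?_
      have hterm : ∀ j, (starRingEnd ℂ) (b j) * (M j k * (a k * ((Real.log ‖a k‖ : ℝ) : ℂ)))
          = ((starRingEnd ℂ) (b j) * M j k) * (a k * ((Real.log ‖a k‖ : ℝ) : ℂ)) :=
        fun j => by ring
      rw [Finset.sum_congr rfl (fun j _ => hterm j), ← Finset.sum_mul, hdual k]
      rw [show (starRingEnd ℂ) (a k) * (a k * ((Real.log ‖a k‖ : ℝ) : ℂ))
          = (a k * (starRingEnd ℂ) (a k)) * ((Real.log ‖a k‖ : ℝ) : ℂ) by ring]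
      rw [Complex.mul_conj]
    have h10 : ∑ j, 2 * ((starRingEnd ℂ) (b j) * B' j).re
        = 2 * (∑ j, ((starRingEnd ℂ) (b j) * B' j)).re := by
      rw [Complex.re_sum, Finset.mul_sum]
    rw [h10, h9, Complex.re_sum, Finset.mul_sum]
    refine Finset.sum_congr rfl fun k _ => ?_
    have h11 : ((Complex.normSq (a k) : ℂ) * ((Real.log ‖a k‖ : ℝ) : ℂ)).re
        = Complex.normSq (a k) * Real.log ‖a k‖ := by
      rw [← Complex.ofReal_mul]; exact Complex.ofReal_re _
    rw [h11]
    rw [Complex.normSq_eq_norm_sq, Real.log_pow]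
    push_cast
    ring
  have hfinal : (∑ j, Complex.normSq (b j) * Real.log (Complex.normSq (b j)))
      + ∑ k, Complex.normSq (a k) * Real.log (Complex.normSq (a k)) ≤ 2 * Real.log c := by
    rw [← hDN_eq]; linarith [hD]
  -- rewrite the goal
  have hgoalτ : ∑ j, ‖(inner ℂ h (τ j) : ℂ)‖^2 * Real.log (‖(inner ℂ h (τ j) : ℂ)‖^2)
      = ∑ j, Complex.normSq (b j) * Real.log (Complex.normSq (b j)) := by
    refine Finset.sum_congr rfl fun j _ => ?_
    rw [show ‖(inner ℂ h (τ j) : ℂ)‖ = ‖b j‖ from by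
      rw [hbdef]; exact norm_inner_symm h (τ j)]
    rw [Complex.normSq_eq_norm_sq]
  have hgoalω : ∑ k, ‖(inner ℂ h (ω k) : ℂ)‖^2 * Real.log (‖(inner ℂ h (ω k) : ℂ)‖^2)
      = ∑ k, Complex.normSq (a k) * Real.log (Complex.normSq (a k)) := by
    refine Finset.sum_congr rfl fun k _ => ?_
    rw [show ‖(inner ℂ h (ω k) : ℂ)‖ = ‖a k‖ from by
      rw [hadef]; exact norm_inner_symm h (ω k)]
    rw [Complex.normSq_eq_norm_sq]
  rw [ge_iff_le, hgoalτ, hgoalω]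
  linarith
end

section
/- The natural logarithm is operator monotone: if a, b are positive elements of a C*-algebra with spectra contained in (0, ∞) and a ≤ b, then log a ≤ log b (logarithms via continuous functional calculus). -/
set_option linter.unusedSectionVars false

open MeasureTheory Set

namespace LogOperatorMonotoneAux

noncomputable def logClamp (t : ℝ) : ℝ := max 0 (min t 1)

noncomputable def logKer (t z : ℝ) : ℝ :=
  (z - 1) * ((1 - logClamp t) + logClamp t * z)⁻¹

lemma logClamp_mem (t : ℝ) : logClamp t ∈ Icc (0:ℝ) 1 :=
  ⟨le_max_left _ _, max_le (by norm_num) (min_le_right _ _)⟩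

lemma logClamp_continuous : Continuous logClamp := by
  unfold logClamp; fun_prop

lemma logClamp_of_mem {t : ℝ} (ht : t ∈ Ioc (0:ℝ) 1) : logClamp t = t := by
  simp only [logClamp, min_eq_left ht.2, max_eq_right ht.1.le]

lemma logKer_denom_pos {t z : ℝ} (hz : 0 < z) :
    0 < (1 - logClamp t) + logClamp t * z := by
  obtain ⟨h0, h1⟩ := logClamp_mem t
  rcases eq_or_lt_of_le h1 with h | h
  · rw [h]; simpa using hz
  · have : 0 ≤ logClamp t * z := mul_nonneg h0 hz.le
    linarith

lemma logKer_denom_ge {t z m : ℝ} (hm1 : m ≤ 1) (hmz : m ≤ z) :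
    m ≤ (1 - logClamp t) + logClamp t * z := by
  obtain ⟨h0, h1⟩ := logClamp_mem t
  nlinarith

/-- Scalar integral representation of the logarithm. -/
lemma scalar_log_repr {z : ℝ} (hz : 0 < z) :
    ∫ t in Ioc (0:ℝ) 1, logKer t z = Real.log z := by
  have hpos : ∀ t ∈ Icc (0:ℝ) 1, 0 < 1 + t * (z - 1) := by
    intro t ht; nlinarith [ht.1, ht.2, mul_nonneg ht.1 hz.le]
  have hcongr : ∀ t ∈ Ioc (0:ℝ) 1, logKer t z = (z - 1) * (1 + t * (z - 1))⁻¹ := by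
    intro t ht
    rw [logKer, logClamp_of_mem ht]
    ring_nf
  rw [setIntegral_congr_fun measurableSet_Ioc hcongr,
    ← intervalIntegral.integral_of_le (zero_le_one)]
  have hderiv : ∀ t ∈ uIcc (0:ℝ) 1,
      HasDerivAt (fun t => Real.log (1 + t * (z - 1)))
        ((z - 1) * (1 + t * (z - 1))⁻¹) t := by
    intro t ht
    rw [uIcc_of_le zero_le_one] at ht
    have h1 : HasDerivAt (fun t : ℝ => 1 + t * (z - 1)) (z - 1) t := by
      have := HasDerivAt.const_add (1:ℝ) ((hasDerivAt_id t).mul_const (z - 1))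
      simpa using this
    have h2 := (Real.hasDerivAt_log (hpos t ht).ne').comp t h1
    simpa [mul_comm, Function.comp_def] using h2
  have hInt : IntervalIntegrable (fun t => (z - 1) * (1 + t * (z - 1))⁻¹)
      MeasureTheory.volume 0 1 := by
    apply ContinuousOn.intervalIntegrable
    rw [uIcc_of_le zero_le_one]
    exact continuousOn_const.mul (ContinuousOn.inv₀ (by fun_prop)
      fun s hs => (hpos s hs).ne')
  rw [intervalIntegral.integral_eq_sub_of_hasDerivAt hderiv hInt]
  simp

variable {A : Type*} [CStarAlgebra A] [PartialOrder A] [StarOrderedRing A]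

lemma logKer_bound {a : A} (ha' : spectrum ℝ a ⊆ Set.Ioi 0) :
    ∃ M : ℝ, ∀ t z, z ∈ spectrum ℝ a → |logKer t z| ≤ M := by
  rcases (spectrum ℝ a).eq_empty_or_nonempty with h | h
  · exact ⟨0, by simp [h]⟩
  · have hcpt : IsCompact (spectrum ℝ a) := spectrum.isCompact a
    set ε := sInf (spectrum ℝ a) with hε_def
    set S := sSup (spectrum ℝ a) with hS_def
    have hε_mem : ε ∈ spectrum ℝ a := hcpt.sInf_mem h
    have hS_mem : S ∈ spectrum ℝ a := hcpt.sSup_mem h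
    have hε : (0:ℝ) < ε := ha' hε_mem
    set m := min 1 ε with hm_def
    have hm : (0:ℝ) < m := lt_min one_pos hε
    refine ⟨(|S| + 1) * m⁻¹, fun t z hz => ?_⟩
    have hzpos : (0:ℝ) < z := ha' hz
    have hzle : z ≤ S := le_csSup hcpt.bddAbove hz
    have hzge : ε ≤ z := csInf_le hcpt.bddBelow hz
    have hd : m ≤ (1 - logClamp t) + logClamp t * z :=
      logKer_denom_ge (min_le_left 1 ε) ((min_le_right 1 ε).trans hzge)
    rw [logKer, abs_mul, abs_inv]
    have h1 : |z - 1| ≤ |S| + 1 := by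
      rw [abs_le]; constructor <;> [nlinarith [abs_nonneg S]; nlinarith [le_abs_self S]]
    have h2 : |(1 - logClamp t) + logClamp t * z|⁻¹ ≤ m⁻¹ := by
      rw [abs_of_pos (logKer_denom_pos hzpos)]
      exact inv_anti₀ hm hd
    exact mul_le_mul h1 h2 (by positivity) (by positivity)

lemma logKer_restrict_continuous {a : A} (ha' : spectrum ℝ a ⊆ Set.Ioi 0) :
    Continuous (fun t : ℝ => (spectrum ℝ a).restrict (logKer t)).uncurry := by
  have h1 : Continuous fun p : ℝ × (spectrum ℝ a) =>
      (1 - logClamp p.1) + logClamp p.1 * (p.2 : ℝ) := by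
    have := logClamp_continuous
    fun_prop
  have h2 : ∀ p : ℝ × (spectrum ℝ a),
      (1 - logClamp p.1) + logClamp p.1 * (p.2 : ℝ) ≠ 0 :=
    fun p => (logKer_denom_pos (ha' p.2.2)).ne'
  exact ((continuous_subtype_val.comp continuous_snd).sub continuous_const).mul
    (h1.inv₀ h2)

lemma cfc_log_repr {a : A} (ha : 0 ≤ a) (ha' : spectrum ℝ a ⊆ Set.Ioi 0) :
    CFC.log a = ∫ t in Ioc (0:ℝ) 1, cfc (logKer t) a := by
  obtain ⟨M, hM⟩ := logKer_bound ha'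
  haveI : IsFiniteMeasure (volume.restrict (Ioc (0:ℝ) 1)) :=
    ⟨by simp [Real.volume_Ioc]⟩
  have hmain := cfc_integral (μ := volume.restrict (Ioc (0:ℝ) 1)) logKer
    (fun _ => M) a (by
      have := logClamp_continuous
      show ContinuousOn (fun p : ℝ × ℝ => (p.2 - 1) * ((1 - logClamp p.1) + logClamp p.1 * p.2)⁻¹) _
      apply ContinuousOn.mul (by fun_prop) (ContinuousOn.inv₀ (by fun_prop) ?_)
      rintro ⟨t, z⟩ ⟨_, hz⟩
      exact (logKer_denom_pos (ha' hz)).ne')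
    (.of_forall fun t z hz => by rw [Real.norm_eq_abs]; exact hM t z hz)
    (hasFiniteIntegral_const M) ha.isSelfAdjoint
  rw [← hmain]
  exact cfc_congr fun z hz => (scalar_log_repr (ha' hz)).symm

lemma cfc_affine_eq {t : ℝ} (x : A) (hx : IsSelfAdjoint x) :
    cfc (fun z : ℝ => (1 - t) + t * z) x = algebraMap ℝ A (1 - t) + t • x := by
  calc cfc (fun z : ℝ => (1 - t) + t * z) x
      = cfc (fun _ : ℝ => (1 - t)) x + cfc (fun z : ℝ => t * z) x := by
        rw [← cfc_add x _ _]
    _ = algebraMap ℝ A (1 - t) + t • x := by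
        rw [cfc_const _ _, cfc_const_mul_id _ _]

lemma logKer_cfc_mono {a b : A} (ha : 0 ≤ a) (hb : 0 ≤ b)
    (ha' : spectrum ℝ a ⊆ Set.Ioi 0) (hb' : spectrum ℝ b ⊆ Set.Ioi 0)
    (hab : a ≤ b) {t : ℝ} (ht : t ∈ Ioc (0:ℝ) 1) :
    cfc (logKer t) a ≤ cfc (logKer t) b := by
  have ht0 : (0:ℝ) < t := ht.1
  set g : ℝ → ℝ := fun z => (1 - t) + t * z with hg_def
  have hgpos : ∀ {x : A}, spectrum ℝ x ⊆ Set.Ioi 0 → ∀ z ∈ spectrum ℝ x, 0 < g z := by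
    intro x hx' z hz
    have := hx' hz
    simp only [hg_def]
    nlinarith [ht.2, (Set.mem_Ioi.mp this)]
  have hua : IsUnit (cfc g a) :=
    isUnit_cfc g a (by fun_prop) ha.isSelfAdjoint
      (fun z hz => (hgpos ha' z hz).ne')
  have hub : IsUnit (cfc g b) :=
    isUnit_cfc g b (by fun_prop) hb.isSelfAdjoint
      (fun z hz => (hgpos hb' z hz).ne')
  have hca_nonneg : 0 ≤ cfc g a := cfc_nonneg fun z hz => (hgpos ha' z hz).le
  have hcab : cfc g a ≤ cfc g b := by
    rw [cfc_affine_eq a ha.isSelfAdjoint, cfc_affine_eq b hb.isSelfAdjoint]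
    have : t • a ≤ t • b := by
      rw [← sub_nonneg, ← smul_sub]
      exact smul_nonneg ht0.le (sub_nonneg.mpr hab)
    exact add_le_add_right this _
  have hinv : (↑hub.unit⁻¹ : A) ≤ ↑hua.unit⁻¹ := by
    apply CStarAlgebra.inv_le_inv (a := hua.unit) (b := hub.unit)
    · rw [IsUnit.unit_spec]; exact hca_nonneg
    · rw [IsUnit.unit_spec, IsUnit.unit_spec]; exact hcab
  have key : ∀ (x : A) (hx : 0 ≤ x) (hx' : spectrum ℝ x ⊆ Set.Ioi 0)
      (hu : IsUnit (cfc g x)),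
      cfc (logKer t) x = algebraMap ℝ A t⁻¹ - t⁻¹ • (↑hu.unit⁻¹ : A) := by
    intro x hx hx' hu
    have hxsa : IsSelfAdjoint x := hx.isSelfAdjoint
    have step1 : cfc (logKer t) x = cfc (fun z => t⁻¹ - t⁻¹ * (g z)⁻¹) x := by
      apply cfc_congr
      intro z hz
      have hgz : g z ≠ 0 := (hgpos hx' z hz).ne'
      simp only [logKer, logClamp_of_mem ht, hg_def] at hgz ⊢
      have := ht0.ne'
      rw [← div_eq_mul_inv, div_eq_iff hgz, sub_mul, mul_assoc, inv_mul_cancel₀ hgz,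
        ← mul_sub, eq_inv_mul_iff_mul_eq₀ this]
      ring
    have hginv_cont : ContinuousOn (fun z => (g z)⁻¹) (spectrum ℝ x) := by
      apply ContinuousOn.inv₀ (by fun_prop) (fun z hz => (hgpos hx' z hz).ne')
    have step2 : cfc (fun z => (g z)⁻¹) x = (↑hu.unit⁻¹ : A) := by
      rw [cfc_inv (f := g) (a := x) (fun z hz => (hgpos hx' z hz).ne') (by fun_prop) hxsa]
      exact (congrArg Ring.inverse hu.unit_spec.symm).trans (Ring.inverse_unit hu.unit)
    rw [step1, cfc_sub (fun _ => t⁻¹) (fun z => t⁻¹ * (g z)⁻¹) x (by fun_prop) (continuousOn_const.mul hginv_cont),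
      cfc_const _ _ hxsa, cfc_const_mul _ _ _ hginv_cont, step2]
  rw [key a ha ha' hua, key b hb hb' hub]
  have : t⁻¹ • (↑hub.unit⁻¹ : A) ≤ t⁻¹ • (↑hua.unit⁻¹ : A) := by
    rw [← sub_nonneg, ← smul_sub]
    exact smul_nonneg (by positivity) (sub_nonneg.mpr hinv)
  exact sub_le_sub_left this _

lemma cfc_logKer_continuous {a : A} (ha : 0 ≤ a) (ha' : spectrum ℝ a ⊆ Set.Ioi 0) :
    Continuous (fun t => cfc (logKer t) a) := by
  have h := logKer_restrict_continuous ha'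
  have heq : (fun t => cfc (logKer t) a) = fun t =>
      cfcL (R := ℝ) ha.isSelfAdjoint (ContinuousMap.curry ⟨_, h⟩ t) := by
    ext t
    have hf : ContinuousOn (logKer t) (spectrum ℝ a) :=
      continuousOn_iff_continuous_restrict.mpr (h.uncurry_left t)
    rw [cfc_apply (logKer t) a (ha := ha.isSelfAdjoint) (hf := hf)]
    congr
  rw [heq]
  exact (cfcL (R := ℝ) ha.isSelfAdjoint).continuous.comp
    (ContinuousMap.curry ⟨_, h⟩).continuous

lemma cfc_logKer_integrable {a : A} (ha : 0 ≤ a) (ha' : spectrum ℝ a ⊆ Set.Ioi 0) :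
    Integrable (fun t => cfc (logKer t) a) (volume.restrict (Ioc (0:ℝ) 1)) := by
  have h := (cfc_logKer_continuous ha ha').continuousOn (s := Icc (0:ℝ) 1)
  exact (h.integrableOn_compact isCompact_Icc).mono_set Ioc_subset_Icc_self

end LogOperatorMonotoneAux

open LogOperatorMonotoneAux in
/-- **Operator monotonicity of the logarithm**: if `a ≤ b` are positive elements of a
C*-algebra with spectra contained in `(0, ∞)`, then `log a ≤ log b`, where the logarithms
are defined via the continuous functional calculus. -/
theorem log_operator_monotone {A : Type*} [CStarAlgebra A] [PartialOrder A]
    [StarOrderedRing A] {a b : A} (ha : 0 ≤ a) (hb : 0 ≤ b)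
    (ha' : spectrum ℝ a ⊆ Set.Ioi 0) (hb' : spectrum ℝ b ⊆ Set.Ioi 0)
    (hab : a ≤ b) : CFC.log a ≤ CFC.log b := by
  rw [cfc_log_repr ha ha', cfc_log_repr hb hb', ← sub_nonneg, ← integral_sub
    (cfc_logKer_integrable hb hb') (cfc_logKer_integrable ha ha')]
  haveI : IsProbabilityMeasure (volume.restrict (Ioc (0:ℝ) 1)) :=
    ⟨by simp [Real.volume_Ioc]⟩
  have hconv : Convex ℝ {x : A | 0 ≤ x} := by
    intro x hx y hy α β hα hβ _
    exact add_nonneg (smul_nonneg hα hx) (smul_nonneg hβ hy)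
  have hmem : ∀ᵐ t ∂(volume.restrict (Ioc (0:ℝ) 1)),
      cfc (logKer t) b - cfc (logKer t) a ∈ {x : A | 0 ≤ x} := by
    filter_upwards [ae_restrict_mem measurableSet_Ioc] with t ht
    exact sub_nonneg.mpr (logKer_cfc_mono ha hb ha' hb' hab ht)
  exact hconv.integral_mem CStarAlgebra.isClosed_nonneg hmem
    ((cfc_logKer_integrable hb hb').sub (cfc_logKer_integrable ha ha'))
end

section
/- Let E be a Hilbert C*-module over a commutative unital C*-algebra A, and let {τ_j}, {ω_k} be unit inner product sequences (⟨τ_j,τ_j⟩ = ⟨ω_k,ω_k⟩ = 1) in E. Then for any x ∈ E with ⟨x,x⟩ = 1, ‖⟨τ_j, x⟩⟨x, ω_k⟩⟨ω_k, x⟩⟨x, τ_j⟩‖ ≤ ((1 + ‖⟨τ_j, ω_k⟩‖)/2)² for every j, k. -/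
open WeakDual in
lemma char_apply_nonneg_aux {A : Type*} [CStarAlgebra A] [PartialOrder A]
    [StarOrderedRing A] (φ : characterSpace ℂ A) {a : A} (ha : 0 ≤ a) :
    φ a = (Complex.normSq (φ (CFC.sqrt a)) : ℝ) := by
  have hs : star (CFC.sqrt a) = CFC.sqrt a :=
    (IsSelfAdjoint.of_nonneg (CFC.sqrt_nonneg (a := a))).star_eq
  have h : a = star (CFC.sqrt a) * CFC.sqrt a := by
    rw [hs, CFC.sqrt_mul_sqrt_self a ha]
  conv_lhs => rw [h]
  rw [map_mul, map_star, Complex.normSq_eq_conj_mul_self]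
  rfl

open WeakDual in
lemma char_re_mono_aux {A : Type*} [CStarAlgebra A] [PartialOrder A]
    [StarOrderedRing A] (φ : characterSpace ℂ A) {a b : A} (hab : a ≤ b) :
    (φ a).re ≤ (φ b).re := by
  have h := char_apply_nonneg_aux φ (sub_nonneg.mpr hab)
  have h2 := congrArg Complex.re h
  simp only [map_sub, Complex.sub_re, Complex.ofReal_re] at h2
  have h3 := Complex.normSq_nonneg (φ (CFC.sqrt (b - a)))
  linarith

set_option maxHeartbeats 1000000 in
/-- For unit inner product vectors `τ_j`, `ω_k` in a Hilbert C*-module `E` over a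
commutative unital C*-algebra and `x` with `⟨x,x⟩ = 1`,
`‖⟨τ_j,x⟩⟨x,ω_k⟩⟨ω_k,x⟩⟨x,τ_j⟩‖ ≤ ((1 + ‖⟨τ_j,ω_k⟩‖)/2)²`. -/
theorem norm_inner_four_mul_le {A E : Type*} [CommCStarAlgebra A]
    [PartialOrder A] [StarOrderedRing A] [AddCommGroup E] [Module ℂ E] [SMul A E]
    [Norm E] [CStarModule A E] (τ ω : ℕ → E)
    (hτ : ∀ j, (inner A (τ j) (τ j) : A) = 1) (hω : ∀ k, (inner A (ω k) (ω k) : A) = 1)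
    (x : E) (hx : (inner A x x : A) = 1) (j k : ℕ) :
    ‖(inner A (τ j) x : A) * (inner A x (ω k) : A) * (inner A (ω k) x : A) *
        (inner A x (τ j) : A)‖ ≤ ((1 + ‖(inner A (τ j) (ω k) : A)‖) / 2) ^ 2 := by
  rcases subsingleton_or_nontrivial A with hA | hA
  · rw [Subsingleton.elim ((inner A (τ j) x : A) * (inner A x (ω k) : A) * (inner A (ω k) x : A) *
        (inner A x (τ j) : A)) (0 : A), norm_zero]
    positivity
  set u : E := τ j with hu
  set v : E := ω k with hv
  set t : ℝ := ‖(inner A u v : A)‖ with ht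
  have htnn : 0 ≤ t := norm_nonneg _
  set z : A := (inner A u x : A) * (inner A x v : A) * (inner A v x : A) * (inner A x u : A) with hz
  have hx1 : ‖x‖ = 1 := by
    have h1 : ‖x‖ ^ 2 = ‖(inner A x x : A)‖ := CStarModule.norm_sq_eq A
    rw [hx, norm_one] at h1
    have h2 : (0:ℝ) ≤ ‖x‖ := CStarModule.norm_nonneg A
    nlinarith
  have key : ∀ φ : WeakDual.characterSpace ℂ A,
      ‖(WeakDual.gelfandTransform ℂ A z) φ‖ ≤ ((1 + t) / 2) ^ 2 := by
    intro φ
    rw [WeakDual.gelfandTransform_apply_apply]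
    set c₁ : ℂ := φ (inner A u x : A) with hc₁
    set c₂ : ℂ := φ (inner A v x : A) with hc₂
    set g : ℂ := φ (inner A u v : A) with hg
    have hstar : ∀ e f : E, φ (inner A e f : A) = starRingEnd ℂ (φ (inner A f e : A)) := by
      intro e f
      rw [← CStarModule.star_inner f e, map_star]
      rfl
    have hgt : ‖g‖ ≤ t := AlgHom.norm_apply_le_self φ _
    have huu : (inner A u u : A) = 1 := hτ j
    have hvv : (inner A v v : A) = 1 := hω k
    set y : E := c₁ • u + c₂ • v with hy
    set S : ℝ := Complex.normSq c₁ + Complex.normSq c₂ with hS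
    have hSnn : 0 ≤ S :=
      add_nonneg (Complex.normSq_nonneg _) (Complex.normSq_nonneg _)
    have hn1 : Complex.normSq c₁ = ‖c₁‖ ^ 2 := by
      rw [Complex.normSq_eq_norm_sq]
    have hn2 : Complex.normSq c₂ = ‖c₂‖ ^ 2 := by
      rw [Complex.normSq_eq_norm_sq]
    have hxy : φ (inner A x y : A) = (S : ℂ) := by
      simp only [hy, CStarModule.inner_add_right, CStarModule.inner_smul_right_complex,
        map_add, map_smul, smul_eq_mul, hstar x u, hstar x v, ← hc₁, ← hc₂]
      rw [hS]
      push_cast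
      simp only [Complex.normSq_eq_conj_mul_self]
      ring
    have hyx : φ (inner A y x : A) = (S : ℂ) := by
      rw [hstar y x, hxy]
      simp
    have hyy : (φ (inner A y y : A)).re ≤ S + 2 * (starRingEnd ℂ c₁ * c₂ * g).re := by
      have hcalc : φ (inner A y y : A)
          = (S : ℂ) + (starRingEnd ℂ c₁ * c₂ * g + c₁ * starRingEnd ℂ c₂ * starRingEnd ℂ g) := by
        simp only [hy, CStarModule.inner_add_right, CStarModule.inner_add_left,
          CStarModule.inner_smul_right_complex, CStarModule.inner_smul_left_complex,
          smul_smul, map_add, map_smul, smul_eq_mul]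
        rw [huu, hvv, map_one]
        rw [show φ (inner A v u : A) = starRingEnd ℂ g from hstar v u]
        simp only [← hg, Complex.star_def]
        rw [hS]
        push_cast
        simp only [Complex.normSq_eq_conj_mul_self]
        ring
      rw [hcalc]
      have : (c₁ * starRingEnd ℂ c₂ * starRingEnd ℂ g).re
          = (starRingEnd ℂ c₁ * c₂ * g).re := by
        rw [show c₁ * starRingEnd ℂ c₂ * starRingEnd ℂ g
            = starRingEnd ℂ (starRingEnd ℂ c₁ * c₂ * g) by simp [map_mul]]
        exact Complex.conj_re _
      simp only [Complex.add_re, Complex.ofReal_re, this]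
      linarith
    have hcs : (inner A y x : A) * (inner A x y : A) ≤ (inner A y y : A) := by
      have h := CStarModule.inner_mul_inner_swap_le (A := A) (x := x) (y := y)
      rwa [hx1, one_pow, one_smul, mul_comm] at h
    have hre := char_re_mono_aux φ hcs
    rw [map_mul, hyx, hxy] at hre
    have hre1 : ((S : ℂ) * (S : ℂ)).re = S * S := by
      rw [← Complex.ofReal_mul]; exact Complex.ofReal_re _
    rw [hre1] at hre
    have hbound : (starRingEnd ℂ c₁ * c₂ * g).re ≤ ‖c₁‖ * ‖c₂‖ * t := by
      calc (starRingEnd ℂ c₁ * c₂ * g).re ≤ ‖starRingEnd ℂ c₁ * c₂ * g‖ :=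
            Complex.re_le_norm _
        _ = ‖c₁‖ * ‖c₂‖ * ‖g‖ := by rw [norm_mul, norm_mul, RCLike.norm_conj]
        _ ≤ ‖c₁‖ * ‖c₂‖ * t :=
            mul_le_mul_of_nonneg_left hgt (by positivity)
    have hamgm : 2 * (‖c₁‖ * ‖c₂‖) ≤ S := by
      rw [hS, hn1, hn2]
      nlinarith [sq_nonneg (‖c₁‖ - ‖c₂‖)]
    have hSS : S * S ≤ S * (1 + t) := by nlinarith [norm_nonneg c₁, norm_nonneg c₂]
    have hSle : S ≤ 1 + t := by
      rcases le_or_gt S (1 + t) with h | h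
      · exact h
      · exfalso; nlinarith
    have hzval : φ z = ((Complex.normSq c₁ * Complex.normSq c₂ : ℝ) : ℂ) := by
      rw [hz, map_mul, map_mul, map_mul, ← hc₁, hstar x v, ← hc₂, hstar x u, ← hc₁]
      push_cast
      simp only [Complex.normSq_eq_conj_mul_self]
      ring
    rw [hzval, Complex.norm_real, Real.norm_eq_abs,
      abs_of_nonneg (mul_nonneg (Complex.normSq_nonneg _) (Complex.normSq_nonneg _))]
    have hfin : Complex.normSq c₁ * Complex.normSq c₂ ≤ (S / 2) ^ 2 := by
      nlinarith [sq_nonneg (Complex.normSq c₁ - Complex.normSq c₂),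
        Complex.normSq_nonneg c₁, Complex.normSq_nonneg c₂]
    have hfin2 : (S / 2) ^ 2 ≤ ((1 + t) / 2) ^ 2 := by nlinarith
    linarith
  have hnorm : ‖z‖ = ‖WeakDual.gelfandTransform ℂ A z‖ :=
    ((gelfandTransform_isometry A).norm_map_of_map_zero (map_zero _) z).symm
  rw [hnorm]
  exact (ContinuousMap.norm_le _ (by positivity)).mpr key
end
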